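/- (Factorization identity) Let S be a strongly continuous semigroup on a Banach space X, let h : [0,∞) → X be continuous, and let 0 < α < 1. Define Y(s) = ∫₀^s (s−r)^{−α} S(s−r) h(r) dr. Then for every t ≥ 0, ∫₀^t S(t−s) h(s) ds = (sin(πα)/π) ∫₀^t (t−s)^{α−1} S(t−s) Y(s) ds. -/

import Mathlib

/-!
Both sides are integrals over the triangle `0 < r < s < t`. By the semigroup law,
`(t - s)^(α-1) S(t-s) Y(s) = ∫₀^s (t - s)^(α-1) (s - r)^(-α) S(t-r) h(r) dr`. After exchanging
the order of integration, the inner integral is the Beta integral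
`∫_r^t (t - s)^(α-1) (s - r)^(-α) ds = B(1 - α, α) = Γ(α) Γ(1 - α) = π / sin(πα)`,
which does not depend on `r`; the same computation shows that the kernel is integrable on the
triangle, which justifies Fubini. Strong continuity enters through Banach–Steinhaus: `S` is
bounded on compacts, so `r ↦ S(t - r) h(r)` is continuous.
-/

open intervalIntegral MeasureTheory Real Set

theorem sin_pi_mul_pos {α : ℝ} (hα0 : 0 < α) (hα1 : α < 1) : 0 < sin (π * α) :=
  sin_pos_of_pos_of_lt_pi (by positivity) (by nlinarith [pi_pos])

theorem integral_sub_rpow_mul_sub_rpow {α r t : ℝ} (hα0 : 0 < α) (hα1 : α < 1) (hrt : r < t) :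
    ∫ s in r..t, (t - s) ^ (α - 1) * (s - r) ^ (-α) = π / sin (π * α) := by
  have hd : 0 < t - r := sub_pos.2 hrt
  have hshift := intervalIntegral.integral_comp_sub_right
    (fun x => x ^ (-α) * (t - r - x) ^ (α - 1)) r (a := r) (b := t)
  simp only [sub_self, sub_sub_sub_cancel_right, mul_comm ((_ : ℝ) ^ (-α))] at hshift
  have hGamma := Complex.Gamma_mul_Gamma_eq_betaIntegral (s := 1 - α) (t := α)
    (by simpa using hα1) (by simpa using hα0)
  rw [sub_add_cancel, Complex.Gamma_one, one_mul, mul_comm, Complex.Gamma_mul_Gamma_one_sub]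
    at hGamma
  have hbeta := Complex.betaIntegral_scaled (1 - α) α hd
  rw [sub_add_cancel, sub_self, Complex.cpow_zero, one_mul, ← hGamma] at hbeta
  apply Complex.ofReal_injective
  rw [hshift, ← intervalIntegral.integral_ofReal]
  push_cast
  rw [← hbeta]
  refine intervalIntegral.integral_congr fun x hx => ?_
  rw [uIcc_of_le hd.le] at hx
  push_cast
  rw [Complex.ofReal_cpow hx.1, Complex.ofReal_cpow (by linarith [hx.2])]
  push_cast
  ring_nf

def lowerTriangle (a b : ℝ) : Set (ℝ × ℝ) := {p | p.1 ∈ Ioo a b ∧ p.2 ∈ Ioo a p.1}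

theorem mem_lowerTriangle {a b s r : ℝ} :
    (s, r) ∈ lowerTriangle a b ↔ s ∈ Ioo a b ∧ r ∈ Ioo a s := Iff.rfl

theorem mem_lowerTriangle' {a b s r : ℝ} :
    (s, r) ∈ lowerTriangle a b ↔ r ∈ Ioo a b ∧ s ∈ Ioo r b := by
  simp only [lowerTriangle, mem_Ioo]
  constructor <;> rintro ⟨⟨h1, h2⟩, h3, h4⟩ <;>
    exact ⟨⟨by linarith, by linarith⟩, by linarith, by linarith⟩

theorem measurableSet_lowerTriangle (a b : ℝ) : MeasurableSet (lowerTriangle a b) :=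
  ((measurableSet_lt measurable_const measurable_fst).inter
    (measurableSet_lt measurable_fst measurable_const)).inter
    ((measurableSet_lt measurable_const measurable_snd).inter
    (measurableSet_lt measurable_snd measurable_fst))

section

variable {E : Type*} [NormedAddCommGroup E] [NormedSpace ℝ E]

theorem integral_indicator_lowerTriangle_left (a b : ℝ) (f : ℝ × ℝ → E) (s : ℝ) :
    ∫ r, (lowerTriangle a b).indicator f (s, r)
      = (Ioo a b).indicator (fun s => ∫ r in a..s, f (s, r)) s := by
  by_cases hs : s ∈ Ioo a b
  · rw [indicator_of_mem hs, intervalIntegral.integral_of_le hs.1.le, integral_Ioc_eq_integral_Ioo,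
      ← MeasureTheory.integral_indicator measurableSet_Ioo]
    congr 1 with r
    classical simp only [indicator_apply, mem_lowerTriangle, hs, true_and]
  · rw [indicator_of_notMem hs, ← integral_zero ℝ E]
    congr 1 with r
    exact indicator_of_notMem (fun h => hs h.1) _

theorem integral_indicator_lowerTriangle_right (a b : ℝ) (f : ℝ × ℝ → E) (r : ℝ) :
    ∫ s, (lowerTriangle a b).indicator f (s, r)
      = (Ioo a b).indicator (fun r => ∫ s in r..b, f (s, r)) r := by
  by_cases hr : r ∈ Ioo a b
  · rw [indicator_of_mem hr, intervalIntegral.integral_of_le hr.2.le, integral_Ioc_eq_integral_Ioo,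
      ← MeasureTheory.integral_indicator measurableSet_Ioo]
    congr 1 with s
    classical simp only [indicator_apply, mem_lowerTriangle', hr, true_and]
  · rw [indicator_of_notMem hr, ← integral_zero ℝ E]
    congr 1 with s
    exact indicator_of_notMem (fun h => hr (mem_lowerTriangle'.1 h).1) _

theorem integral_integral_swap_lowerTriangle [CompleteSpace E] {a b : ℝ} (hab : a ≤ b)
    {f : ℝ × ℝ → E} (hf : IntegrableOn f (lowerTriangle a b)) :
    ∫ s in a..b, ∫ r in a..s, f (s, r) = ∫ r in a..b, ∫ s in r..b, f (s, r) := by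
  have hF : Integrable (Function.uncurry fun s r => (lowerTriangle a b).indicator f (s, r))
      (volume.prod volume) := by
    rw [← Measure.volume_eq_prod]
    exact (integrable_indicator_iff (measurableSet_lowerTriangle a b)).2 hf
  have hswap := integral_integral_swap hF
  simp only [integral_indicator_lowerTriangle_left, integral_indicator_lowerTriangle_right,
    MeasureTheory.integral_indicator measurableSet_Ioo] at hswap
  rwa [intervalIntegral.integral_of_le hab, intervalIntegral.integral_of_le hab,
    integral_Ioc_eq_integral_Ioo, integral_Ioc_eq_integral_Ioo]

theorem integrableOn_lowerTriangle_sub_rpow_mul_sub_rpow {α a t : ℝ} (hα0 : 0 < α)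
    (hα1 : α < 1) :
    IntegrableOn (fun p : ℝ × ℝ => (t - p.1) ^ (α - 1) * (p.1 - p.2) ^ (-α))
      (lowerTriangle a t) := by
  set κ := fun p : ℝ × ℝ => (t - p.1) ^ (α - 1) * (p.1 - p.2) ^ (-α)
  have hκ : ∀ p, 0 ≤ (lowerTriangle a t).indicator κ p := indicator_nonneg fun p hp =>
    mul_nonneg (rpow_nonneg (by linarith [hp.1.2]) _) (rpow_nonneg (by linarith [hp.2.2]) _)
  have hslice (r : ℝ) : ∫ s, (lowerTriangle a t).indicator κ (s, r)
      = (Ioo a t).indicator (fun _ => π / sin (π * α)) r := by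
    rw [integral_indicator_lowerTriangle_right]
    exact congrFun (indicator_congr fun r (hr : r ∈ Ioo a t) =>
      integral_sub_rpow_mul_sub_rpow hα0 hα1 hr.2) r
  rw [← integrable_indicator_iff (measurableSet_lowerTriangle a t), Measure.volume_eq_prod,
    integrable_prod_iff' ((Measurable.indicator (by fun_prop)
      (measurableSet_lowerTriangle a t)).aestronglyMeasurable)]
  refine ⟨Filter.Eventually.of_forall fun r => ?_, ?_⟩
  · by_cases hr : r ∈ Ioo a t
    · -- the Beta integral is nonzero, so its integrand is integrable
      refine Integrable.of_integral_ne_zero ?_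
      rw [hslice, indicator_of_mem hr]
      exact (div_pos pi_pos (sin_pi_mul_pos hα0 hα1)).ne'
    · refine (integrable_zero ℝ ℝ volume).congr (Filter.Eventually.of_forall fun s => ?_)
      exact (indicator_of_notMem (fun h => hr (mem_lowerTriangle'.1 h).1) _).symm
  · simp only [Real.norm_of_nonneg (hκ _), hslice]
    exact (integrable_indicator_iff measurableSet_Ioo).2
      (integrableOn_const measure_Ioo_lt_top.ne)

theorem integral_integral_sub_rpow_mul_sub_rpow_smul [CompleteSpace E] {α a t : ℝ} (hα0 : 0 < α)
    (hα1 : α < 1) (hat : a ≤ t) {G : ℝ → E} (hG : ContinuousOn G (Icc a t)) :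
    ∫ s in a..t, ∫ r in a..s, ((t - s) ^ (α - 1) * (s - r) ^ (-α)) • G r
      = (π / sin (π * α)) • ∫ r in a..t, G r := by
  have hint : IntegrableOn (fun p : ℝ × ℝ => ((t - p.1) ^ (α - 1) * (p.1 - p.2) ^ (-α)) • G p.2)
      (lowerTriangle a t) :=
    (integrableOn_lowerTriangle_sub_rpow_mul_sub_rpow hα0 hα1).smul_continuousOn_of_subset
      (hG.comp continuous_snd.continuousOn fun p hp => hp.2) (measurableSet_lowerTriangle a t)
      (isCompact_Icc.prod isCompact_Icc) fun p hp =>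
        ⟨Ioo_subset_Icc_self hp.1, ⟨hp.2.1.le, hp.2.2.le.trans hp.1.2.le⟩⟩
  rw [integral_integral_swap_lowerTriangle hat hint, ← intervalIntegral.integral_smul,
    intervalIntegral.integral_of_le hat, intervalIntegral.integral_of_le hat,
    integral_Ioc_eq_integral_Ioo, integral_Ioc_eq_integral_Ioo]
  refine setIntegral_congr_fun measurableSet_Ioo fun r hr => ?_
  dsimp only
  rw [intervalIntegral.integral_smul_const, integral_sub_rpow_mul_sub_rpow hα0 hα1 hr.2]

section StronglyContinuous

variable {ι F : Type*} [TopologicalSpace ι] [NormedAddCommGroup F] [NormedSpace ℝ F]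
  {K : Set ι} {φ : ι → E →L[ℝ] F}

theorem IsCompact.exists_forall_opNorm_le [CompleteSpace E] (hK : IsCompact K)
    (hφ : ∀ x, ContinuousOn (fun τ => φ τ x) K) : ∃ C, ∀ τ ∈ K, ‖φ τ‖ ≤ C := by
  obtain ⟨C, hC⟩ := banach_steinhaus (g := fun τ : K => φ τ) fun x => by
    obtain ⟨C, hC⟩ := hK.exists_bound_of_continuousOn (hφ x)
    exact ⟨C, fun τ => hC τ τ.2⟩
  exact ⟨C, fun τ hτ => hC ⟨τ, hτ⟩⟩

theorem IsCompact.continuousOn_clm_apply [CompleteSpace E] (hK : IsCompact K)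
    (hφ : ∀ x, ContinuousOn (fun τ => φ τ x) K) {u : ι → E} (hu : ContinuousOn u K) :
    ContinuousOn (fun τ => φ τ (u τ)) K := by
  obtain ⟨C, hC⟩ := hK.exists_forall_opNorm_le hφ
  intro τ₀ hτ₀
  have hsmall : Filter.Tendsto (fun τ => φ τ (u τ - u τ₀)) (nhdsWithin τ₀ K) (nhds 0) := by
    refine squeeze_zero_norm' ?_ (by simpa using ((hu τ₀ hτ₀).sub_const (u τ₀)).norm.const_mul C)
    filter_upwards [self_mem_nhdsWithin] with τ hτ
    exact (φ τ).le_of_opNorm_le (hC τ hτ) _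
  have hsum := hsmall.add (hφ (u τ₀) τ₀ hτ₀)
  simp only [map_sub, sub_add_cancel, zero_add] at hsum
  exact hsum

end StronglyContinuous

end

open Real Set in
theorem stmt10_general {X : Type*} [NormedAddCommGroup X] [NormedSpace ℝ X] [CompleteSpace X]
    (S : ℝ → X →L[ℝ] X)
    (hSsem : ∀ a b : ℝ, 0 ≤ a → 0 ≤ b → S (a + b) = (S a).comp (S b))
    (hScont : ∀ x : X, ContinuousOn (fun t => S t x) (Set.Ici 0))
    (h : ℝ → X) (hh : Continuous h)
    (α : ℝ) (hα0 : 0 < α) (hα1 : α < 1)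
    (Y : ℝ → X)
    (hY : ∀ s : ℝ, Y s = ∫ r in (0 : ℝ)..s, ((s - r) ^ (-α)) • S (s - r) (h r)) :
    ∀ t : ℝ, 0 ≤ t →
      (∫ s in (0 : ℝ)..t, S (t - s) (h s))
        = (Real.sin (Real.pi * α) / Real.pi) •
            ∫ s in (0 : ℝ)..t, ((t - s) ^ (α - 1)) • S (t - s) (Y s) := by
  intro t ht
  have hG (a : ℝ) : ContinuousOn (fun r => S (a - r) (h r)) (Icc 0 a) :=
    isCompact_Icc.continuousOn_clm_apply
      (fun x => (hScont x).comp (by fun_prop) fun r hr => sub_nonneg.2 hr.2) hh.continuousOn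
  have hfactor : ∀ s ∈ uIcc 0 t, (t - s) ^ (α - 1) • S (t - s) (Y s)
      = ∫ r in 0..s, ((t - s) ^ (α - 1) * (s - r) ^ (-α)) • S (t - r) (h r) := by
    intro s hs
    rw [uIcc_of_le ht] at hs
    have hrpow : IntervalIntegrable (fun r => (s - r) ^ (-α)) volume 0 s := by
      simpa using (intervalIntegrable_rpow' (a := s) (b := 0) (by linarith)).comp_sub_left s
    have hint : IntervalIntegrable (fun r => (s - r) ^ (-α) • S (s - r) (h r)) volume 0 s :=
      hrpow.smul_continuousOn (by rw [uIcc_of_le hs.1]; exact hG s)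
    rw [hY s, ← (S (t - s)).intervalIntegral_comp_comm hint, ← intervalIntegral.integral_smul]
    refine intervalIntegral.integral_congr fun r hr => ?_
    rw [uIcc_of_le hs.1] at hr
    rw [map_smul, smul_smul, ← ContinuousLinearMap.comp_apply,
      ← hSsem _ _ (sub_nonneg.2 hs.2) (sub_nonneg.2 hr.2), sub_add_sub_cancel]
  rw [intervalIntegral.integral_congr hfactor,
    integral_integral_sub_rpow_mul_sub_rpow_smul hα0 hα1 ht (hG t)]
  have hscalar : sin (π * α) / π * (π / sin (π * α)) = 1 := by
    rw [div_mul_div_cancel₀ pi_ne_zero, div_self (sin_pi_mul_pos hα0 hα1).ne']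
  rw [smul_smul, hscalar, one_smul]

/-- the Da Prato–Zabczyk factorization identity: for a strongly continuous
semigroup `S`, continuous `h`, and `0 < α < 1`,
`∫₀^t S(t−s)h(s) ds = (sin(πα)/π) ∫₀^t (t−s)^{α−1} S(t−s) Y(s) ds`, where
`Y(s) = ∫₀^s (s−r)^{−α} S(s−r) h(r) dr`. -/
theorem stmt10 {X : Type*} [NormedAddCommGroup X] [NormedSpace ℝ X] [CompleteSpace X]
    (S : ℝ → X →L[ℝ] X)
    (hS0 : S 0 = ContinuousLinearMap.id ℝ X)
    (hSsem : ∀ a b : ℝ, 0 ≤ a → 0 ≤ b → S (a + b) = (S a).comp (S b))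
    (hScont : ∀ x : X, ContinuousOn (fun t => S t x) (Set.Ici 0))
    (h : ℝ → X) (hh : Continuous h)
    (α : ℝ) (hα0 : 0 < α) (hα1 : α < 1)
    (Y : ℝ → X)
    (hY : ∀ s : ℝ, Y s = ∫ r in (0 : ℝ)..s, ((s - r) ^ (-α)) • S (s - r) (h r)) :
    ∀ t : ℝ, 0 ≤ t →
      (∫ s in (0 : ℝ)..t, S (t - s) (h s))
        = (Real.sin (Real.pi * α) / Real.pi) •
            ∫ s in (0 : ℝ)..t, ((t - s) ^ (α - 1)) • S (t - s) (Y s) :=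
  stmt10_general S hSsem hScont h hh α hα0 hα1 Y hY
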